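/- arXiv:1804.01569 — 2 statements merged into one kernel-verified Lean document; each statement's English description precedes it below -/
import Mathlib

section
/- Let C be a smooth Frobenius non-classical plane curve of degree d over F_q (characteristic p > 2), and let L be an F_q-line that intersects C transversely. Then all d points of L ∩ C are F_q-rational; equivalently, any F_q-line that contains a non-F_q-rational point Q of C is tangent to C at Q (L = T_Q(C)). -/
open MvPolynomial

noncomputable section

/-- The projective plane over a field `K`, as the projectivization of `K^3`. -/
abbrev ProjPlane (K : Type*) [Field K] := Projectivization K (Fin 3 → K)

variable {F : Type*} [Field F]

/-- A geometric point (over the algebraic closure) lies on the plane curve defined by `f`. -/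
def OnCurve (f : MvPolynomial (Fin 3) F) (P : ProjPlane (AlgebraicClosure F)) : Prop :=
  aeval P.rep f = 0

/-- A geometric point lies on the `F`-rational line with coefficient vector `a`. -/
def OnLine (a : Fin 3 → F) (P : ProjPlane (AlgebraicClosure F)) : Prop :=
  ∑ i, algebraMap F (AlgebraicClosure F) (a i) * P.rep i = 0

/-- The plane curve defined by `f` is smooth: the gradient of `f` is nonzero at every
geometric point of the curve. -/
def SmoothCurve (f : MvPolynomial (Fin 3) F) : Prop :=
  ∀ P : ProjPlane (AlgebraicClosure F), OnCurve f P → ∃ i, aeval P.rep (pderiv i f) ≠ 0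

/-- The `F`-line with coefficients `a` meets the curve defined by `f` transversely:
the intersection consists of exactly `d` distinct geometric points. -/
def Transverse (f : MvPolynomial (Fin 3) F) (a : Fin 3 → F) (d : ℕ) : Prop :=
  {P : ProjPlane (AlgebraicClosure F) | OnCurve f P ∧ OnLine a P}.ncard = d

/-- The restriction of `f` to the line `t ↦ v + t • w`, as a univariate polynomial. -/
def LinePoly (f : MvPolynomial (Fin 3) F) (v w : Fin 3 → AlgebraicClosure F) :
    Polynomial (AlgebraicClosure F) :=
  aeval (fun i => Polynomial.C (v i) + Polynomial.X * Polynomial.C (w i)) f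

/-- `P` is a flex point of the curve defined by `f`: the tangent line at `P` meets the
curve at `P` with intersection multiplicity at least 3. The tangent line is parametrized
through `P.rep` and a direction `w` lying on the tangent line, independent from `P.rep`. -/
def IsFlex (f : MvPolynomial (Fin 3) F) (P : ProjPlane (AlgebraicClosure F)) : Prop :=
  OnCurve f P ∧ ∃ w : Fin 3 → AlgebraicClosure F,
    (¬ ∃ c : AlgebraicClosure F, w = c • P.rep) ∧
    (∑ i, aeval P.rep (pderiv i f) * w i = 0) ∧
    (Polynomial.X : Polynomial (AlgebraicClosure F)) ^ 3 ∣ LinePoly f P.rep w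

/-- The `F`-line with coefficients `a` is the tangent line to the curve `f` at the
geometric point `P`, i.e. `a` is proportional to the gradient of `f` at `P`. -/
def IsTangentAt (f : MvPolynomial (Fin 3) F) (a : Fin 3 → F)
    (P : ProjPlane (AlgebraicClosure F)) : Prop :=
  OnCurve f P ∧ ∃ c : AlgebraicClosure F, c ≠ 0 ∧
    ∀ i, algebraMap F (AlgebraicClosure F) (a i) = c * aeval P.rep (pderiv i f)

/-- The `q`-power Frobenius map on the projective plane. -/
def FrobPt {K : Type*} [Field K] (q : ℕ) (P : ProjPlane K) : ProjPlane K :=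
  Projectivization.mk K (fun i => P.rep i ^ q) (by
    intro hc
    rcases Nat.eq_zero_or_pos q with h0 | h0
    · have := congrFun hc 0
      simp [h0] at this
    · apply P.rep_nonzero
      funext i
      have := congrFun hc i
      simp only [Pi.zero_apply] at this ⊢
      exact pow_eq_zero_iff h0.ne' |>.mp this)

/-- A geometric point of the projective plane is `F`-rational. -/
def IsRationalPt (P : ProjPlane (AlgebraicClosure F)) : Prop :=
  ∃ v : Fin 3 → F, v ≠ 0 ∧ ∃ c : AlgebraicClosure F, c ≠ 0 ∧
    ∀ i, P.rep i = c * algebraMap F (AlgebraicClosure F) (v i)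

/-- The curve defined by `f` is Frobenius non-classical over `F` (with `q = #F`):
the image of every geometric point of the curve under the `q`-power Frobenius lies on
the tangent line at that point. -/
def FrobeniusNonClassical (f : MvPolynomial (Fin 3) F) (q : ℕ) : Prop :=
  ∀ P : ProjPlane (AlgebraicClosure F), OnCurve f P →
    ∑ i, aeval P.rep (pderiv i f) * P.rep i ^ q = 0

/-!
Let `P = [v]` be a non-rational point of `C ∩ L` and `w = Φ(v)`. Since `C` and `L` are defined
over `F_q`, `[w]` lies on `C ∩ L` too, and `[w] ≠ [v]` because `P` is not rational, so `L` is
the line through `[v]` and `[w]`. Frobenius non-classicality says that `w` lies on the tangent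
line at `P`, so `t ↦ f(v + t w)` has a double root at `t = 0`; its degree is less than `d`
because `f(w) = 0`. Its roots, together with `[w]`, account for every point of `C ∩ L`, which
therefore has at most `d - 1` points, contradicting transversality.
-/

open scoped Polynomial Matrix LinearAlgebra.Projectivization

namespace Polynomial

variable {R : Type*} [CommSemiring R]

theorem coeff_prod_sum_of_natDegree_le {ι : Type*} (s : Finset ι) (g : ι → R[X]) (n : ι → ℕ)
    (h : ∀ i ∈ s, (g i).natDegree ≤ n i) :
    (∏ i ∈ s, g i).coeff (∑ i ∈ s, n i) = ∏ i ∈ s, (g i).coeff (n i) := by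
  classical
  induction s using Finset.induction_on with
  | empty => simp
  | insert j s hj ih =>
    have hs : ∀ i ∈ s, (g i).natDegree ≤ n i := fun i hi => h i (Finset.mem_insert_of_mem hi)
    rw [Finset.prod_insert hj, Finset.sum_insert hj, Finset.prod_insert hj,
      coeff_mul_add_eq_of_natDegree_le (h j (Finset.mem_insert_self j s))
        ((natDegree_prod_le _ _).trans (Finset.sum_le_sum hs)), ih hs]

variable {σ : Type*} [Fintype σ] {g : σ → R[X]} {n : ℕ}

theorem natDegree_prod_pow_le (hg : ∀ i, (g i).natDegree ≤ n) (m : σ → ℕ) :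
    (∏ i, g i ^ m i).natDegree ≤ (∑ i, m i) * n := by
  rw [Finset.sum_mul]
  exact (natDegree_prod_le _ _).trans <| Finset.sum_le_sum fun i _ =>
    natDegree_pow_le.trans (Nat.mul_le_mul_left _ (hg i))

theorem coeff_prod_pow_of_natDegree_le (hg : ∀ i, (g i).natDegree ≤ n) (m : σ → ℕ) :
    (∏ i, g i ^ m i).coeff ((∑ i, m i) * n) = ∏ i, (g i).coeff n ^ m i := by
  rw [Finset.sum_mul, coeff_prod_sum_of_natDegree_le _ _ _ fun i _ =>
    natDegree_pow_le.trans (Nat.mul_le_mul_left _ (hg i))]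
  exact Finset.prod_congr rfl fun i _ => coeff_pow_of_natDegree_le (hg i)

theorem card_roots_toFinset_lt_natDegree {R : Type*} [CommRing R] [IsDomain R] [DecidableEq R]
    {p : R[X]} {a : R} (ha : 1 < p.rootMultiplicity a) :
    p.roots.toFinset.card < p.natDegree := by
  have hdup : ¬ p.roots.Nodup := by
    rw [Multiset.nodup_iff_count_le_one]
    exact fun h => (h a).not_gt (by rwa [count_roots])
  exact lt_of_lt_of_le
    (lt_of_le_of_ne (Multiset.toFinset_card_le _)
      (mt Multiset.toFinset_card_eq_card_iff_nodup.mp hdup))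
    (card_roots' p)

end Polynomial

namespace MvPolynomial

variable {σ R S : Type*} [Fintype σ] [CommSemiring R] [CommSemiring S] [Algebra R S]

theorem derivative_aeval (f : MvPolynomial σ R) (g : σ → S[X]) :
    Polynomial.derivative (aeval g f)
      = ∑ i, aeval g (pderiv i f) * Polynomial.derivative (g i) := by
  classical
  induction f using MvPolynomial.induction_on with
  | C a => simp [Polynomial.algebraMap_apply]
  | add p q hp hq => simp [hp, hq, Finset.sum_add_distrib, add_mul]
  | mul_X p j hp =>
    simp only [map_mul, aeval_X, Polynomial.derivative_mul, hp, pderiv_mul, pderiv_X,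
      map_add, add_mul, Finset.sum_add_distrib, Finset.sum_mul]
    simp [Pi.single_apply, mul_comm, mul_assoc]

variable {f : MvPolynomial σ R} {d : ℕ}

theorem IsHomogeneous.sum_eq_of_mem_support (hf : f.IsHomogeneous d) {m : σ →₀ ℕ}
    (hm : m ∈ f.support) : ∑ i, m i = d := by
  rw [← Finsupp.degree_eq_sum]
  exact (hf.degree_eq_sum_deg_support hm).symm

theorem IsHomogeneous.aeval_smul (hf : f.IsHomogeneous d) (c : S) (x : σ → S) :
    MvPolynomial.aeval (c • x) f = c ^ d * MvPolynomial.aeval x f := by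
  simp only [aeval_def, eval₂_eq', Finset.mul_sum]
  refine Finset.sum_congr rfl fun m hm => ?_
  simp only [Pi.smul_apply, smul_eq_mul, mul_pow, Finset.prod_mul_distrib,
    Finset.prod_pow_eq_pow_sum, hf.sum_eq_of_mem_support hm]
  ring

theorem IsHomogeneous.natDegree_aeval_le (hf : f.IsHomogeneous d) {g : σ → S[X]} {n : ℕ}
    (hg : ∀ i, (g i).natDegree ≤ n) : (MvPolynomial.aeval g f).natDegree ≤ d * n := by
  rw [aeval_def, eval₂_eq']
  refine Polynomial.natDegree_sum_le_of_forall_le _ _ fun m hm => ?_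
  rw [Polynomial.algebraMap_apply, ← hf.sum_eq_of_mem_support hm]
  exact Polynomial.natDegree_C_mul_le _ _ |>.trans (Polynomial.natDegree_prod_pow_le hg m)

theorem IsHomogeneous.coeff_aeval (hf : f.IsHomogeneous d) {g : σ → S[X]} {n : ℕ}
    (hg : ∀ i, (g i).natDegree ≤ n) :
    (MvPolynomial.aeval g f).coeff (d * n) = MvPolynomial.aeval (fun i => (g i).coeff n) f := by
  simp only [aeval_def, eval₂_eq', Polynomial.finsetSum_coeff]
  refine Finset.sum_congr rfl fun m hm => ?_
  rw [Polynomial.algebraMap_apply, Polynomial.coeff_C_mul, ← hf.sum_eq_of_mem_support hm,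
    Polynomial.coeff_prod_pow_of_natDegree_le hg]

end MvPolynomial

theorem MvPolynomial.IsHomogeneous.pos_of_aeval_eq_zero {σ K : Type*} [CommRing K]
    [Nontrivial K] [Algebra F K] {f : MvPolynomial σ F} {d : ℕ} (hf : f.IsHomogeneous d)
    (hf0 : f ≠ 0) {x : σ → K} (hx : MvPolynomial.aeval x f = 0) : 0 < d := by
  refine Nat.pos_of_ne_zero fun hd => hf0 ?_
  have hC : f = C (coeff 0 f) := totalDegree_eq_zero_iff_eq_C.mp (hd ▸ hf.totalDegree hf0)
  rw [hC, aeval_C, map_eq_zero_iff _ (algebraMap F K).injective] at hx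
  rw [hC, hx, C_0]

section LinearAlgebra

variable {K V : Type*} [Field K] [AddCommGroup V] [Module K V] {v w : V}

theorem Module.Dual.ker_eq_span_pair [FiniteDimensional K V] (hV : Module.finrank K V = 3)
    {φ : Module.Dual K V} (hφ : φ ≠ 0) (hvw : LinearIndependent K ![v, w]) (hv : φ v = 0)
    (hw : φ w = 0) : LinearMap.ker φ = Submodule.span K {v, w} := by
  have hle : Submodule.span K {v, w} ≤ LinearMap.ker φ := by
    rw [Submodule.span_le]
    rintro x (rfl | rfl) <;> assumption
  have hspan : Module.finrank K (Submodule.span K {v, w}) = 2 := by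
    rw [← Matrix.range_cons_cons_empty v w ![], finrank_span_eq_card hvw, Fintype.card_fin]
  have hker := Module.Dual.finrank_ker_add_one_of_ne_zero hφ
  exact (Submodule.eq_of_le_of_finrank_eq hle (by omega)).symm

theorem LinearIndependent.add_smul_ne_zero (hvw : LinearIndependent K ![v, w]) (t : K) :
    v + t • w ≠ 0 := fun h =>
  one_ne_zero (LinearIndependent.pair_iff.mp hvw 1 t (by rwa [one_smul])).1

namespace Projectivization

theorem rep_mk_mem_iff {W : Submodule K V} {x : V} (hx : x ≠ 0) :
    (mk K x hx).rep ∈ W ↔ x ∈ W := by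
  obtain ⟨c, hc⟩ := exists_smul_eq_mk_rep K x hx
  rw [← hc]
  exact Submodule.smul_mem_iff' W c

def lineParam (hvw : LinearIndependent K ![v, w]) (t : K) : ℙ K V :=
  mk K (v + t • w) (hvw.add_smul_ne_zero t)

theorem lineParam_injective (hvw : LinearIndependent K ![v, w]) :
    Function.Injective (lineParam hvw) := by
  intro s t hst
  obtain ⟨c, hc⟩ :=
    (mk_eq_mk_iff' K _ _ (hvw.add_smul_ne_zero s) (hvw.add_smul_ne_zero t)).mp hst
  have hzero : (c - 1) • v + (c * t - s) • w = 0 := by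
    linear_combination (norm := module) hc
  obtain ⟨hc1, hcts⟩ := LinearIndependent.pair_iff.mp hvw _ _ hzero
  rw [sub_eq_zero.mp hc1, one_mul, sub_eq_zero] at hcts
  exact hcts.symm

theorem mem_range_lineParam_or_eq_mk (hvw : LinearIndependent K ![v, w]) (Q : ℙ K V)
    (hQ : Q.rep ∈ Submodule.span K {v, w}) :
    Q ∈ Set.range (lineParam hvw) ∨ Q = mk K w (hvw.ne_zero 1) := by
  obtain ⟨α, β, hαβ⟩ := Submodule.mem_span_pair.mp hQ
  rw [← mk_rep Q]
  by_cases hα : α = 0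
  · right
    refine (mk_eq_mk_iff' K _ _ _ _).mpr ⟨β, ?_⟩
    rw [← hαβ, hα, zero_smul, zero_add]
  · left
    refine ⟨β / α, (mk_eq_mk_iff' K _ _ _ _).mpr ⟨α⁻¹, ?_⟩⟩
    rw [← hαβ, smul_add, smul_smul, smul_smul, inv_mul_cancel₀ hα, one_smul, inv_mul_eq_div]

end Projectivization

end LinearAlgebra

namespace FiniteField

variable [Fintype F] {K : Type*} [Field K] [Algebra F K]

theorem mem_range_algebraMap_of_pow_card_eq {x : K} (hx : x ^ Fintype.card F = x) :
    x ∈ (algebraMap F K).range := by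
  have hq : 1 < Fintype.card F := Fintype.one_lt_card
  have hsplit : (Polynomial.X ^ Fintype.card F - Polynomial.X : F[X]).Splits := by
    rw [Polynomial.splits_iff_card_roots, roots_X_pow_card_sub_X,
      X_pow_card_sub_X_natDegree_eq F hq]
    rfl
  exact hsplit.mem_range_of_isRoot (X_pow_card_sub_X_ne_zero F hq) (by simp [hx])

theorem aeval_pow_card {σ : Type*} (f : MvPolynomial σ F) (x : σ → K) :
    aeval (fun i => x i ^ Fintype.card F) f = aeval x f ^ Fintype.card F :=
  (comp_aeval_apply x (frobeniusAlgHom F K) f).symm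

theorem dotProduct_pow_card {ι : Type*} [Fintype ι] (a : ι → F) (x : ι → K) :
    (fun i => algebraMap F K (a i)) ⬝ᵥ (fun i => x i ^ Fintype.card F)
      = ((fun i => algebraMap F K (a i)) ⬝ᵥ x) ^ Fintype.card F := by
  change ∑ i, algebraMap F K (a i) * frobeniusAlgHom F K (x i)
    = frobeniusAlgHom F K (∑ i, algebraMap F K (a i) * x i)
  simp only [map_sum, map_mul, AlgHom.commutes]

end FiniteField

theorem isRationalPt_of_smul_eq_frobenius [Fintype F] {P : ProjPlane (AlgebraicClosure F)}
    {c : AlgebraicClosure F} (hc : c • P.rep = fun i => P.rep i ^ Fintype.card F) :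
    IsRationalPt P := by
  obtain ⟨i₀, hi₀⟩ := Function.ne_iff.mp P.rep_nonzero
  have hc0 : c ≠ 0 := by
    rintro rfl
    have := congrFun hc i₀
    simp only [zero_smul, Pi.zero_apply] at this
    exact hi₀ (pow_eq_zero_iff Fintype.card_ne_zero |>.mp this.symm)
  have hfix : ∀ i, (P.rep i / P.rep i₀) ^ Fintype.card F = P.rep i / P.rep i₀ := fun i => by
    rw [div_pow, ← congrFun hc i, ← congrFun hc i₀, Pi.smul_apply, Pi.smul_apply, smul_eq_mul,
      smul_eq_mul, mul_div_mul_left _ _ hc0]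
  choose u hu using fun i => FiniteField.mem_range_algebraMap_of_pow_card_eq (hfix i)
  refine ⟨u, fun hu0 => ?_, P.rep i₀, hi₀, fun i => ?_⟩
  · have := hu i₀
    rw [hu0, Pi.zero_apply, map_zero, div_self hi₀] at this
    exact zero_ne_one this
  · rw [hu i, mul_div_cancel₀ _ hi₀]

theorem linearIndependent_rep_frobenius [Fintype F] {P : ProjPlane (AlgebraicClosure F)}
    (hP : ¬ IsRationalPt P) :
    LinearIndependent (AlgebraicClosure F) ![P.rep, fun i => P.rep i ^ Fintype.card F] :=
  (LinearIndependent.pair_iff' P.rep_nonzero).mpr fun _ hc =>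
    hP (isRationalPt_of_smul_eq_frobenius hc)

section LineRestriction

variable (f : MvPolynomial (Fin 3) F) (v w : Fin 3 → AlgebraicClosure F)

theorem eval_linePoly (t : AlgebraicClosure F) :
    (LinePoly f v w).eval t = aeval (v + t • w) f := by
  have := comp_aeval_apply (fun i => Polynomial.C (v i) + Polynomial.X * Polynomial.C (w i))
    ((Polynomial.aeval t).restrictScalars F) f
  have hline : v + t • w = fun i => v i + w i * t := funext fun i => by simp [mul_comm]
  simpa [LinePoly, hline] using this

theorem eval_derivative_linePoly (t : AlgebraicClosure F) :
    (Polynomial.derivative (LinePoly f v w)).eval t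
      = ∑ i, aeval (v + t • w) (pderiv i f) * w i := by
  simp [LinePoly, derivative_aeval, Polynomial.eval_finsetSum, ← eval_linePoly]

variable {f} {d : ℕ}

theorem natDegree_linePoly_le (hf : f.IsHomogeneous d) : (LinePoly f v w).natDegree ≤ d := by
  have := hf.natDegree_aeval_le (n := 1)
    (g := fun i => Polynomial.C (v i) + Polynomial.X * Polynomial.C (w i))
    fun i => by compute_degree
  rwa [mul_one] at this

theorem coeff_linePoly (hf : f.IsHomogeneous d) : (LinePoly f v w).coeff d = aeval w f := by
  have := hf.coeff_aeval (n := 1)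
    (g := fun i => Polynomial.C (v i) + Polynomial.X * Polynomial.C (w i))
    fun i => by compute_degree
  rw [mul_one] at this
  rw [LinePoly, this]
  congr
  funext i
  simp

end LineRestriction

section PlaneCurve

open Projectivization

def lineForm (a : Fin 3 → F) : Module.Dual (AlgebraicClosure F) (Fin 3 → AlgebraicClosure F) :=
  dotProductEquiv _ _ fun i => algebraMap F _ (a i)

theorem lineForm_ne_zero {a : Fin 3 → F} (ha : a ≠ 0) : lineForm a ≠ 0 := by
  refine (LinearEquiv.map_ne_zero_iff _).mpr fun h => ha (funext fun i => ?_)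
  simpa using congrFun h i

theorem onLine_iff_rep_mem_ker {a : Fin 3 → F} {Q : ProjPlane (AlgebraicClosure F)} :
    OnLine a Q ↔ Q.rep ∈ LinearMap.ker (lineForm a) := Iff.rfl

theorem pow_card_mem_ker_lineForm [Fintype F] {a : Fin 3 → F} {x : Fin 3 → AlgebraicClosure F}
    (hx : x ∈ LinearMap.ker (lineForm a)) :
    (fun i => x i ^ Fintype.card F) ∈ LinearMap.ker (lineForm a) := by
  simp only [LinearMap.mem_ker, lineForm, dotProductEquiv_apply_apply] at hx ⊢
  rw [FiniteField.dotProduct_pow_card, hx, zero_pow Fintype.card_ne_zero]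

variable {f : MvPolynomial (Fin 3) F} {d : ℕ}

theorem onCurve_mk_iff (hf : f.IsHomogeneous d) {x : Fin 3 → AlgebraicClosure F} (hx : x ≠ 0) :
    OnCurve f (mk _ x hx) ↔ aeval x f = 0 := by
  obtain ⟨c, hc⟩ := exists_smul_eq_mk_rep (AlgebraicClosure F) x hx
  rw [OnCurve, ← hc, Units.smul_def, hf.aeval_smul, mul_eq_zero,
    or_iff_right (pow_ne_zero _ c.ne_zero)]

variable {a : Fin 3 → F} {v w : Fin 3 → AlgebraicClosure F}

theorem lineParam_mem_of_isRoot (hvw : LinearIndependent (AlgebraicClosure F) ![v, w])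
    (hv : v ∈ LinearMap.ker (lineForm a)) (hw : w ∈ LinearMap.ker (lineForm a))
    (hf : f.IsHomogeneous d) {t : AlgebraicClosure F} (ht : (LinePoly f v w).IsRoot t) :
    lineParam hvw t ∈ {Q | OnCurve f Q ∧ OnLine a Q} :=
  ⟨(onCurve_mk_iff hf _).mpr (eval_linePoly f v w t ▸ ht),
    (rep_mk_mem_iff (hvw.add_smul_ne_zero t)).mpr (add_mem hv (Submodule.smul_mem _ t hw))⟩

theorem setOf_onCurve_onLine_subset (hvw : LinearIndependent (AlgebraicClosure F) ![v, w])
    (hv : v ∈ LinearMap.ker (lineForm a)) (hw : w ∈ LinearMap.ker (lineForm a))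
    (hf : f.IsHomogeneous d) (ha : a ≠ 0) :
    {Q | OnCurve f Q ∧ OnLine a Q} ⊆
      lineParam hvw '' {t | (LinePoly f v w).IsRoot t} ∪ {mk _ w (hvw.ne_zero 1)} := by
  rintro Q ⟨hQC, hQL⟩
  have hspan : Q.rep ∈ Submodule.span (AlgebraicClosure F) {v, w} := by
    rw [← Module.Dual.ker_eq_span_pair (Module.finrank_fin_fun _) (lineForm_ne_zero ha) hvw hv hw]
    exact onLine_iff_rep_mem_ker.mp hQL
  rcases mem_range_lineParam_or_eq_mk hvw Q hspan with ⟨t, rfl⟩ | rfl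
  · exact Or.inl ⟨t, by simpa [eval_linePoly] using (onCurve_mk_iff hf _).mp hQC, rfl⟩
  · exact Or.inr rfl

theorem ncard_setOf_onCurve_onLine_lt (hvw : LinearIndependent (AlgebraicClosure F) ![v, w])
    (hv : v ∈ LinearMap.ker (lineForm a)) (hw : w ∈ LinearMap.ker (lineForm a))
    (hf0 : f ≠ 0) (hf : f.IsHomogeneous d) (ha : a ≠ 0)
    (hvC : aeval v f = 0) (hwC : aeval w f = 0)
    (htan : ∑ i, aeval v (pderiv i f) * w i = 0) :
    {Q | OnCurve f Q ∧ OnLine a Q}.ncard < d := by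
  classical
  set h := LinePoly f v w
  by_cases h0 : h = 0
  · -- the whole line lies on the curve, and `ncard` of the infinite intersection is `0`
    have hinf : {Q | OnCurve f Q ∧ OnLine a Q}.Infinite :=
      (Set.infinite_range_of_injective (lineParam_injective hvw)).mono <| by
        rintro _ ⟨t, rfl⟩
        exact lineParam_mem_of_isRoot hvw hv hw hf (by simp [show LinePoly f v w = 0 from h0])
    rw [hinf.ncard]
    exact hf.pos_of_aeval_eq_zero hf0 hvC
  have hmult : 1 < h.rootMultiplicity 0 := by
    refine (Polynomial.one_lt_rootMultiplicity_iff_isRoot h0).mpr ⟨?_, ?_⟩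
    · simpa [h, eval_linePoly] using hvC
    · simpa [h, eval_derivative_linePoly] using htan
  have hdeg : h.natDegree < d := by
    refine lt_of_le_of_ne (natDegree_linePoly_le v w hf) fun hd => h0 ?_
    rw [← Polynomial.leadingCoeff_eq_zero, Polynomial.leadingCoeff, hd, coeff_linePoly v w hf,
      hwC]
  have hroots : {t | h.IsRoot t} = h.roots.toFinset := by
    ext t
    simp [Polynomial.mem_roots h0]
  calc {Q | OnCurve f Q ∧ OnLine a Q}.ncard
      ≤ (lineParam hvw '' {t | h.IsRoot t} ∪ {mk _ w (hvw.ne_zero 1)}).ncard :=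
        Set.ncard_le_ncard (setOf_onCurve_onLine_subset hvw hv hw hf ha) <| by
          rw [hroots]
          exact (h.roots.toFinset.finite_toSet.image _).union (Set.finite_singleton _)
    _ ≤ (lineParam hvw '' {t | h.IsRoot t}).ncard + 1 :=
        (Set.ncard_union_le _ _).trans_eq (by rw [Set.ncard_singleton])
    _ ≤ h.roots.toFinset.card + 1 := by
        rw [hroots, ← Set.ncard_coe_finset]
        exact Nat.add_le_add_right (Set.ncard_image_le (Finset.finite_toSet _)) 1
    _ ≤ h.natDegree := Polynomial.card_roots_toFinset_lt_natDegree hmult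
    _ < d := hdeg

end PlaneCurve

theorem frobenius_nonclassical_transverse_points_rational_general
    (q d : ℕ)
    (F : Type*) [Field F] [Fintype F] (hcard : Fintype.card F = q)
    (f : MvPolynomial (Fin 3) F) (hf0 : f ≠ 0) (hfd : f.IsHomogeneous d)
    (hfnc : FrobeniusNonClassical f q)
    (a : Fin 3 → F) (ha : a ≠ 0) (htrans : Transverse f a d) :
    ∀ P : ProjPlane (AlgebraicClosure F), OnCurve f P → OnLine a P → IsRationalPt P := by
  subst hcard
  intro P hC hL
  by_contra hP
  have hFrobC : aeval (fun i => P.rep i ^ Fintype.card F) f = 0 := by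
    rw [FiniteField.aeval_pow_card, hC, zero_pow Fintype.card_ne_zero]
  have hPL := onLine_iff_rep_mem_ker.mp hL
  exact (ncard_setOf_onCurve_onLine_lt (linearIndependent_rep_frobenius hP) hPL
    (pow_card_mem_ker_lineForm hPL) hf0 hfd ha hC hFrobC (hfnc P hC)).ne htrans

/-- If `C` is a smooth Frobenius non-classical plane curve over `F_q` and `L` is an
`F_q`-line meeting `C` transversely, then every geometric point of `L ∩ C` is
`F_q`-rational. -/
theorem frobenius_nonclassical_transverse_points_rational
    (p q d : ℕ) [Fact p.Prime] (hp : 2 < p)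
    (F : Type*) [Field F] [Fintype F] [CharP F p] (hcard : Fintype.card F = q)
    (f : MvPolynomial (Fin 3) F) (hf0 : f ≠ 0) (hfd : f.IsHomogeneous d)
    (hsmooth : SmoothCurve f)
    (hfnc : FrobeniusNonClassical f q)
    (a : Fin 3 → F) (ha : a ≠ 0) (htrans : Transverse f a d) :
    ∀ P : ProjPlane (AlgebraicClosure F), OnCurve f P → OnLine a P → IsRationalPt P :=
  frobenius_nonclassical_transverse_points_rational_general q d F hcard f hf0 hfd hfnc a ha htrans
end
end

section
/- Let q be a power of a prime p > 2, let n ≥ 2, and set m = 1 + q + q^2 + ... + q^{n-1}. Let C be the plane curve over F_{q^n} defined by x^m + y^m + z^m = 0. Then there exists an F_{q^n}-line L that intersects C transversely, i.e., L ∩ C consists of m distinct points over the algebraic closure of F_{q^n}. -/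
open MvPolynomial

noncomputable section

variable {F : Type*} [Field F]

/-
The line `z = 0` works. It meets `x^m + y^m + z^m = 0` exactly in the points `[t : 1 : 0]`
with `t^m = -1`, and there are `m` such `t` because `X^m + 1` is separable: `p ∤ m`, since
`m = 1 + q + ⋯ + q^(n-1) ≡ 1 (mod p)`.
-/

theorem geom_sum_cast_eq_one_of_dvd {R : Type*} [Semiring R] {p q n : ℕ} [CharP R p]
    (hpq : p ∣ q) (hn : 0 < n) : ((∑ i ∈ Finset.range n, q ^ i : ℕ) : R) = 1 := by
  obtain ⟨k, rfl⟩ := Nat.exists_eq_add_of_lt hn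
  have hq : (q : R) = 0 := (CharP.cast_eq_zero_iff R p q).2 hpq
  simp [Finset.sum_range_succ', hq]

theorem ncard_setOf_pow_eq {K : Type*} [Field K] [IsAlgClosed K] {m : ℕ} (hm : (m : K) ≠ 0)
    {a : K} (ha : a ≠ 0) : {t : K | t ^ m = a}.ncard = m := by
  classical
  have hm0 : m ≠ 0 := by rintro rfl; exact hm Nat.cast_zero
  set g : Polynomial K := Polynomial.X ^ m - Polynomial.C a
  have hg : g ≠ 0 := Polynomial.X_pow_sub_C_ne_zero (Nat.pos_of_ne_zero hm0) a
  have hroots : {t : K | t ^ m = a} = ↑g.roots.toFinset := by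
    ext t
    simp [g, Polynomial.mem_roots hg, sub_eq_zero]
  rw [hroots, Set.ncard_coe_finset,
    Multiset.toFinset_card_of_nodup (Polynomial.nodup_roots (Polynomial.separable_X_pow_sub_C a hm ha)),
    ← (IsAlgClosed.splits g).natDegree_eq_card_roots, Polynomial.natDegree_X_pow_sub_C]

section LineAtInfinity

variable {K : Type*} [Field K]

def ptOnZeroZ (t : K) : ProjPlane K :=
  Projectivization.mk K ![t, 1, 0] fun h => one_ne_zero (congrFun h 1)

theorem ptOnZeroZ_injective : Function.Injective (ptOnZeroZ (K := K)) := by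
  intro t t' h
  obtain ⟨c, hc⟩ := (Projectivization.mk_eq_mk_iff' K _ _ _ _).1 h
  have h1 : c = 1 := by simpa using congrFun hc 1
  simpa [h1] using (congrFun hc 0).symm

theorem exists_rep_ptOnZeroZ (t : K) :
    ∃ c : K, (ptOnZeroZ t).rep = ![c * t, c, 0] := by
  obtain ⟨c, hc⟩ := Projectivization.exists_smul_eq_mk_rep K ![t, 1, 0]
    fun h => one_ne_zero (congrFun h 1)
  refine ⟨c, ?_⟩
  rw [ptOnZeroZ, ← hc]
  ext i
  fin_cases i <;> simp [Units.smul_def]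

theorem eq_ptOnZeroZ_of_rep (P : ProjPlane K) (hy : P.rep 1 ≠ 0) (hz : P.rep 2 = 0) :
    P = ptOnZeroZ (P.rep 0 / P.rep 1) := by
  conv_lhs => rw [← Projectivization.mk_rep P]
  refine (Projectivization.mk_eq_mk_iff' K _ _ _ _).2 ⟨P.rep 1, ?_⟩
  ext i
  fin_cases i <;> simp [hy, hz, mul_div_cancel₀]

end LineAtInfinity

theorem onCurve_fermat_iff {m : ℕ} (P : ProjPlane (AlgebraicClosure F)) :
    OnCurve (X 0 ^ m + X 1 ^ m + X 2 ^ m : MvPolynomial (Fin 3) F) P ↔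
      P.rep 0 ^ m + P.rep 1 ^ m + P.rep 2 ^ m = 0 := by
  simp [OnCurve]

theorem onLine_zeroZ_iff (P : ProjPlane (AlgebraicClosure F)) :
    OnLine (![0, 0, 1] : Fin 3 → F) P ↔ P.rep 2 = 0 := by
  simp [OnLine, Fin.sum_univ_three]

theorem fermat_inter_zeroZ {m : ℕ} (hm : m ≠ 0) :
    {P : ProjPlane (AlgebraicClosure F) |
        OnCurve (X 0 ^ m + X 1 ^ m + X 2 ^ m : MvPolynomial (Fin 3) F) P ∧
          OnLine ![0, 0, 1] P} =
      ptOnZeroZ '' {t | t ^ m = -1} := by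
  ext P
  simp only [Set.mem_ofPred_eq, Set.mem_image, onCurve_fermat_iff, onLine_zeroZ_iff]
  constructor
  · rintro ⟨hcurve, hz⟩
    rw [hz, zero_pow hm, add_zero] at hcurve
    have hy : P.rep 1 ≠ 0 := by
      intro hy
      rw [hy, zero_pow hm, add_zero, pow_eq_zero_iff hm] at hcurve
      exact P.rep_nonzero (funext fun i => by fin_cases i <;> simpa)
    refine ⟨P.rep 0 / P.rep 1, ?_, (eq_ptOnZeroZ_of_rep P hy hz).symm⟩
    rw [div_pow, eq_neg_of_add_eq_zero_left hcurve, neg_div, div_self (pow_ne_zero _ hy)]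
  · rintro ⟨t, ht, rfl⟩
    obtain ⟨c, hc⟩ := exists_rep_ptOnZeroZ t
    simp only [hc, Matrix.cons_val, mul_pow, ht, zero_pow hm, and_true]
    ring

theorem fermat_type_curve_has_transverse_line_general
    (p s q n m : ℕ) [Fact p.Prime] (hs : 1 ≤ s) (hq : q = p ^ s)
    (hn : 2 ≤ n) (hm : m = ∑ i ∈ Finset.range n, q ^ i)
    (F : Type*) [Field F] [CharP F p] :
    ∃ a : Fin 3 → F, a ≠ 0 ∧
      Transverse (X 0 ^ m + X 1 ^ m + X 2 ^ m : MvPolynomial (Fin 3) F) a m := by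
  have hpq : p ∣ q := hq ▸ dvd_pow_self p (by omega)
  have hmK : (m : AlgebraicClosure F) = 1 := hm ▸ geom_sum_cast_eq_one_of_dvd hpq (by omega)
  have hm0 : m ≠ 0 := by rintro rfl; exact zero_ne_one (Nat.cast_zero.symm.trans hmK)
  refine ⟨![0, 0, 1], fun h => one_ne_zero (congrFun h 2), ?_⟩
  rw [Transverse, fermat_inter_zeroZ hm0, Set.ncard_image_of_injective _ ptOnZeroZ_injective]
  exact ncard_setOf_pow_eq (hmK ▸ one_ne_zero) (neg_ne_zero.2 one_ne_zero)

/-- For `m = 1 + q + ⋯ + q^(n-1)` and `n ≥ 2`, the Fermat-type curve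
`x^m + y^m + z^m = 0` over `F_{qⁿ}` admits an `F_{qⁿ}`-line meeting it transversely in `m`
distinct geometric points. -/
theorem fermat_type_curve_has_transverse_line
    (p s q n m : ℕ) [Fact p.Prime] (hp : 2 < p) (hs : 1 ≤ s) (hq : q = p ^ s)
    (hn : 2 ≤ n) (hm : m = ∑ i ∈ Finset.range n, q ^ i)
    (F : Type*) [Field F] [Fintype F] [CharP F p] (hcard : Fintype.card F = q ^ n) :
    ∃ a : Fin 3 → F, a ≠ 0 ∧
      Transverse (X 0 ^ m + X 1 ^ m + X 2 ^ m : MvPolynomial (Fin 3) F) a m :=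
  fermat_type_curve_has_transverse_line_general p s q n m hs hq hn hm F

end
end
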